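/- Let A ≤ B with A nontrivial, and suppose u ∈ A * F(t) (free product with an infinite cyclic group) is a nontrivial element, and a ∈ A is nonidentity. If u becomes trivial under a homomorphism A * ℤ → B fixing A and sending t to b, then the commutator [a, u] gives a nontrivial relation among the conjugates A^{b^i}. -/

import Mathlib

/-!
Write `A ∗ ⟨t⟩` as the semidirect product `(∗_{i ∈ ℤ} Aᵢ) ⋊ ⟨t⟩` in which `t` shifts the index;
`Aᵢ` is the copy `t⁻ⁱ A tⁱ`. The commutator `[a, w]` has trivial `⟨t⟩`-coordinate, so it is the
image of some `W` in the free product of the copies, and `W` maps to `[a, 1] = 1` in `B`.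
`W ≠ 1` because `a` does not commute with `w`: in the semidirect coordinates, an element
commuting with `a ∈ A₀` conjugates `A₀` to `A₀` (so its shift is zero) and its
`∗ Aᵢ`-coordinate centralises a nontrivial letter of `A₀`, hence lies in `A₀`. So `w ∈ A`, and
then `w = 1` since `A → B` is injective.
-/

open Monoid

namespace Monoid.CoprodI

theorem NeWord.toList_eq_singleton_of_prod_eq_of {ι : Type*} {M : ι → Type*}
    [∀ i, Monoid (M i)] {i j k : ι} (w : NeWord M i j) {m : M k} (h : w.prod = of m) :
    w.toList = [⟨k, m⟩] := by
  classical
  have toList_eq {v : Word M} (hv : w.prod = v.prod) : w.toList = v.toList :=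
    congrArg Word.toList (Word.equiv.symm.injective hv)
  by_cases hm : m = 1
  · subst hm
    exact absurd (toList_eq (v := Word.empty) (h.trans (map_one _))) w.toList_ne_nil
  · exact toList_eq (v := (NeWord.singleton m hm).toWord)
      (h.trans (NeWord.prod_singleton m hm).symm)

theorem index_eq_and_exists_eq_of_of_of_mul_eq_mul_of {ι : Type*} {G : ι → Type*}
    [∀ i, Group (G i)] {i j : ι} {a : G i} {a' : G j} (ha : a ≠ 1) {x : CoprodI G}
    (h : of a * x = x * of a') : i = j ∧ ∃ g : G i, x = of g := by
  classical
  -- Split `x = of g * z` with `z` not starting in `G i`. Then `z⁻¹ * of c * z` is a reduced word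
  -- as written, which is a single letter only when `z` is empty.
  set p := Word.equivPair i (Word.equiv x)
  have hx : x = of p.head * p.tail.prod := by
    rw [← Word.prod_rcons, ← Word.equivPair_symm, Equiv.symm_apply_apply]
    exact (Word.equiv.symm_apply_apply x).symm
  set c := p.head⁻¹ * a * p.head
  have hc : c ≠ 1 := by simpa [c, mul_assoc, inv_mul_eq_one] using ha
  have hconj : p.tail.prod⁻¹ * of c * p.tail.prod = of a' := by
    rw [hx] at h
    simp only [c, map_mul, map_inv]
    calc _ = (of p.head * p.tail.prod)⁻¹ * (of a * (of p.head * p.tail.prod)) := by group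
      _ = of a' := by rw [h]; group
  by_cases ht : p.tail = Word.empty
  · rw [ht, Word.prod_empty, inv_one, one_mul, mul_one] at hconj
    have hidx := (NeWord.singleton c hc).toList_eq_singleton_of_prod_eq_of
      ((NeWord.prod_singleton c hc).trans hconj)
    simp only [NeWord.toList, List.cons.injEq, and_true] at hidx
    exact ⟨congrArg Sigma.fst hidx, p.head, by rw [hx, ht, Word.prod_empty, mul_one]⟩
  · obtain ⟨k, l, w, hw⟩ := NeWord.of_word p.tail ht
    have hk : k ≠ i := by
      have := p.fstIdx_ne
      rw [← hw] at this
      simpa [Word.fstIdx, NeWord.toWord] using this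
    have hlen := (((w.inv.append hk (NeWord.singleton c hc)).append hk.symm w)
      ).toList_eq_singleton_of_prod_eq_of (m := a') (by
        rw [NeWord.append_prod, NeWord.append_prod, NeWord.inv_prod, NeWord.prod_singleton,
          ← hconj, ← hw]
        rfl)
    have hlen' := congrArg List.length hlen
    simp only [NeWord.toList, List.length_append, List.length_singleton] at hlen'
    have := List.length_pos_of_ne_nil w.toList_ne_nil
    omega

variable (H : Type*) [Group H]

def shift (n : ℤ) : CoprodI (fun _ : ℤ => H) ≃* CoprodI (fun _ : ℤ => H) :=
  MonoidHom.toMulEquiv (lift fun j => of (M := fun _ : ℤ => H) (i := j - n))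
    (lift fun j => of (M := fun _ : ℤ => H) (i := j + n))
    (ext_hom _ _ fun j => by ext; simp) (ext_hom _ _ fun j => by ext; simp)

@[simp]
theorem shift_of (n j : ℤ) (c : H) :
    shift H n (of (M := fun _ : ℤ => H) (i := j) c) = of (M := fun _ : ℤ => H) (i := j - n) c :=
  lift_of _ _

def shiftHom : Multiplicative ℤ →* MulAut (CoprodI fun _ : ℤ => H) where
  toFun n := shift H n.toAdd
  map_one' := MulEquiv.toMonoidHom_injective <| ext_hom _ _ fun j => by ext; simp
  map_mul' m n := MulEquiv.toMonoidHom_injective <| ext_hom _ _ fun j => by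
    ext; simp [sub_add_eq_sub_sub_swap]

@[simp]
theorem shiftHom_of (n : Multiplicative ℤ) (j : ℤ) (c : H) :
    shiftHom H n (of (M := fun _ : ℤ => H) (i := j) c) =
      of (M := fun _ : ℤ => H) (i := j - n.toAdd) c :=
  shift_of H _ _ _

end Monoid.CoprodI

namespace Monoid.Coprod

open CoprodI

variable (H : Type*) [Group H]

def conjugatesHom : CoprodI (fun _ : ℤ => H) →* Coprod H (Multiplicative ℤ) :=
  CoprodI.lift fun i => (MulAut.conj ((inr (Multiplicative.ofAdd (1 : ℤ)) :
    Coprod H (Multiplicative ℤ)) ^ (-i))).toMonoidHom.comp inl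

theorem inr_eq_zpow (n : Multiplicative ℤ) :
    (inr n : Coprod H (Multiplicative ℤ)) = inr (Multiplicative.ofAdd 1) ^ n.toAdd := by
  rw [← map_zpow, ← ofAdd_zsmul, smul_eq_mul, mul_one, ofAdd_toAdd]

theorem conjugatesHom_of (j : ℤ) (c : H) :
    conjugatesHom H (of (M := fun _ : ℤ => H) (i := j) c) =
      inr (Multiplicative.ofAdd 1) ^ (-j) * inl c * inr (Multiplicative.ofAdd 1) ^ j := by
  simp only [conjugatesHom, lift_of, MonoidHom.comp_apply, MulEquiv.coe_toMonoidHom,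
    MulAut.conj_apply, zpow_neg, inv_inv]

theorem conjugatesHom_comp_shiftHom (n : Multiplicative ℤ) :
    (conjugatesHom H).comp (shiftHom H n).toMonoidHom =
      (MulAut.conj (inr n)).toMonoidHom.comp (conjugatesHom H) := by
  refine ext_hom _ _ fun j => ?_
  ext c
  simp only [MonoidHom.comp_apply, MulEquiv.coe_toMonoidHom, shiftHom_of, conjugatesHom_of,
    MulAut.conj_apply, inr_eq_zpow H n]
  group

def toSemidirectShift :
    Coprod H (Multiplicative ℤ) →* CoprodI (fun _ : ℤ => H) ⋊[shiftHom H] Multiplicative ℤ :=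
  lift (SemidirectProduct.inl.comp (of (M := fun _ : ℤ => H) (i := 0))) SemidirectProduct.inr

theorem toSemidirectShift_inl (c : H) :
    toSemidirectShift H (inl c) = SemidirectProduct.inl (of (M := fun _ : ℤ => H) (i := 0) c) :=
  rfl

def ofSemidirectShift :
    CoprodI (fun _ : ℤ => H) ⋊[shiftHom H] Multiplicative ℤ →* Coprod H (Multiplicative ℤ) :=
  SemidirectProduct.lift (conjugatesHom H) inr (conjugatesHom_comp_shiftHom H)

theorem ofSemidirectShift_toSemidirectShift (x : Coprod H (Multiplicative ℤ)) :
    ofSemidirectShift H (toSemidirectShift H x) = x := by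
  suffices (ofSemidirectShift H).comp (toSemidirectShift H) = .id _ from DFunLike.congr_fun this x
  refine hom_ext (MonoidHom.ext fun c => ?_) (MonoidHom.ext fun n => ?_)
  · simp [ofSemidirectShift, toSemidirectShift, conjugatesHom_of]
  · simp [ofSemidirectShift, toSemidirectShift]

theorem right_toSemidirectShift (x : Coprod H (Multiplicative ℤ)) :
    (toSemidirectShift H x).right = snd x := by
  suffices SemidirectProduct.rightHom.comp (toSemidirectShift H) = snd from
    DFunLike.congr_fun this x
  exact hom_ext (MonoidHom.ext fun c => by simp [toSemidirectShift])
    (MonoidHom.ext fun n => by simp [toSemidirectShift])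

theorem exists_conjugatesHom_eq_of_snd_eq_one {x : Coprod H (Multiplicative ℤ)} (hx : snd x = 1) :
    ∃ W, conjugatesHom H W = x := by
  refine ⟨(toSemidirectShift H x).left, ?_⟩
  have hinl : SemidirectProduct.inl (toSemidirectShift H x).left = toSemidirectShift H x := by
    ext
    · rfl
    · rw [SemidirectProduct.right_inl, right_toSemidirectShift, hx]
  calc conjugatesHom H (toSemidirectShift H x).left
      = ofSemidirectShift H (SemidirectProduct.inl (toSemidirectShift H x).left) :=
        (SemidirectProduct.lift_inl _ _ _ _).symm
    _ = x := by rw [hinl, ofSemidirectShift_toSemidirectShift]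

theorem exists_eq_inl_of_commute_inl {a : H} (ha : a ≠ 1) {w : Coprod H (Multiplicative ℤ)}
    (h : Commute (inl a) w) : ∃ c, w = inl c := by
  set y := toSemidirectShift H w
  have hy : of (M := fun _ : ℤ => H) (i := 0) a * y.left =
      y.left * of (M := fun _ : ℤ => H) (i := 0 - y.right.toAdd) a := by
    have := congrArg (SemidirectProduct.left ∘ toSemidirectShift H) h.eq
    simpa only [Function.comp_apply, map_mul, SemidirectProduct.mul_left, toSemidirectShift_inl,
      SemidirectProduct.left_inl, SemidirectProduct.right_inl, map_one, MulAut.one_apply,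
      shiftHom_of] using this
  obtain ⟨hidx, c, hc⟩ := index_eq_and_exists_eq_of_of_of_mul_eq_mul_of ha hy
  refine ⟨c, (Function.LeftInverse.injective (ofSemidirectShift_toSemidirectShift H)) ?_⟩
  ext
  · rw [toSemidirectShift_inl, SemidirectProduct.left_inl, ← hc]
  · rw [toSemidirectShift_inl, SemidirectProduct.right_inl, toAdd_one]
    change y.right.toAdd = 0
    omega

theorem lift_comp_conjugatesHom {B : Type*} [Group B] (f : H →* B) (b : B) :
    (lift f (zpowersHom B b)).comp (conjugatesHom H) =
      CoprodI.lift fun i => (MulAut.conj (b ^ (-i))).toMonoidHom.comp f := by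
  refine ext_hom _ _ fun j => MonoidHom.ext fun c => ?_
  simp only [MonoidHom.comp_apply, CoprodI.lift_of, MulEquiv.coe_toMonoidHom, MulAut.conj_apply,
    conjugatesHom_of]
  simp only [map_mul, map_inv, map_zpow, lift_apply_inl, lift_apply_inr, zpowersHom_apply,
    toAdd_ofAdd, zpow_one, zpow_neg, inv_inv]

end Monoid.Coprod

theorem commutator_gives_nontrivial_relation_among_conjugates_general
    {B : Type*} [Group B] (A : Subgroup B) (b : B)
    (a : A) (ha : a ≠ 1)
    (w : Monoid.Coprod A (Multiplicative ℤ)) (hw : w ≠ 1)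
    (hker : Monoid.Coprod.lift A.subtype (zpowersHom B b) w = 1) :
    ∃ W : Monoid.CoprodI (fun _ : ℤ => A),
      W ≠ 1 ∧
      (Monoid.CoprodI.lift
        (fun i : ℤ =>
          (MulAut.conj
            ((Monoid.Coprod.inr (Multiplicative.ofAdd (1 : ℤ)) :
              Monoid.Coprod A (Multiplicative ℤ)) ^ (-i))).toMonoidHom.comp
            Monoid.Coprod.inl :
          ∀ i : ℤ, (fun _ : ℤ => A) i →* Monoid.Coprod A (Multiplicative ℤ))) W
        = (Monoid.Coprod.inl a)⁻¹ * w⁻¹ * Monoid.Coprod.inl a * w ∧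
      (Monoid.CoprodI.lift
        (fun i : ℤ =>
          (MulAut.conj (b ^ (-i))).toMonoidHom.comp A.subtype :
          ∀ i : ℤ, (fun _ : ℤ => A) i →* B)) W = 1 := by
  obtain ⟨W, hW⟩ := Coprod.exists_conjugatesHom_eq_of_snd_eq_one A
    (x := (Coprod.inl a)⁻¹ * w⁻¹ * Coprod.inl a * w) (by simp)
  refine ⟨W, ?_, hW, ?_⟩
  · rintro rfl
    have hcomm : (w * Coprod.inl a)⁻¹ * (Coprod.inl a * w) = 1 := by
      simpa only [map_one, mul_inv_rev, mul_assoc] using hW.symm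
    obtain ⟨c, rfl⟩ := Coprod.exists_eq_inl_of_commute_inl A ha (inv_mul_eq_one.mp hcomm).symm
    have hc : c = 1 := Subtype.ext hker
    exact hw (by rw [hc, map_one])
  · rw [← Coprod.lift_comp_conjugatesHom, MonoidHom.comp_apply, hW]
    simp [hker]

/-- Setting of Lemma 5's proof: `A ≤ B` nontrivial, `b ∈ B`, and
`φ : A * ℤ → B` the canonical map (identical on `A`, the generator `t` of `ℤ`
to `b`).  If `w ∈ A * ℤ` is a nontrivial element of `ker φ` and `a ∈ A \ {1}`,
then the commutator `[a, w] = a⁻¹ w⁻¹ a w`, rewritten via the relations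
`t⁻ⁱ a' tⁱ ↦ (copy of a' in the i-th free factor)`, yields a nontrivial element
`W` of the free product `⨯_{i∈ℤ} Aᵢ` of copies of `A` whose image in `B`
(sending the `i`-th copy to `b⁻ⁱ A bⁱ`) is trivial. -/
theorem commutator_gives_nontrivial_relation_among_conjugates
    {B : Type*} [Group B] (A : Subgroup B) (hA : A ≠ ⊥) (b : B)
    (a : A) (ha : a ≠ 1)
    (w : Monoid.Coprod A (Multiplicative ℤ)) (hw : w ≠ 1)
    (hker : Monoid.Coprod.lift A.subtype (zpowersHom B b) w = 1) :
    ∃ W : Monoid.CoprodI (fun _ : ℤ => A),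
      W ≠ 1 ∧
      (Monoid.CoprodI.lift
        (fun i : ℤ =>
          (MulAut.conj
            ((Monoid.Coprod.inr (Multiplicative.ofAdd (1 : ℤ)) :
              Monoid.Coprod A (Multiplicative ℤ)) ^ (-i))).toMonoidHom.comp
            Monoid.Coprod.inl :
          ∀ i : ℤ, (fun _ : ℤ => A) i →* Monoid.Coprod A (Multiplicative ℤ))) W
        = (Monoid.Coprod.inl a)⁻¹ * w⁻¹ * Monoid.Coprod.inl a * w ∧
      (Monoid.CoprodI.lift
        (fun i : ℤ =>
          (MulAut.conj (b ^ (-i))).toMonoidHom.comp A.subtype :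
          ∀ i : ℤ, (fun _ : ℤ => A) i →* B)) W = 1 :=
  commutator_gives_nontrivial_relation_among_conjugates_general A b a ha w hw hker
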